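/- Fix 1 ≤ k ≤ n and a fractional vector x : Fin m → ℝ with 0 ≤ x j ≤ 1 for all j, and set D(x) = max over finsets S ⊆ Fin n with S.card = k of Σ_{i ∈ S} Σ_{j} |p i j − x j| (booleans identified with 0/1 reals). Then the continuous relaxations of the three formulations, with x fixed, all have optimal value D(x): (i) inf { v : ∃ z : Fin n → Fin m → ℝ with z i j ≥ (p i j)(1 − x j), z i j ≥ (1 − p i j)(x j) for all i,j, and Σ_j Σ_{i ∈ S} z i j ≤ v for all S with S.card = k } = D(x); (ii) inf { k·t + Σ_i v i : t ≥ 0, v i ≥ 0, and ∃ z, d with z i j ≥ (x j)(1 − p i j) + (p i j)(1 − x j), d i ≥ Σ_j z i j, v i ≥ d i − t } = D(x); (iii) inf { Σ_i u i + Σ_{h ∈ Fin k} v h : u i ≥ 0, v h ≥ 0, and ∃ z, d with z i j ≥ (x j)(1 − p i j) + (p i j)(1 − x j), d i ≥ Σ_j z i j, u i + v h ≥ d i for all i, h } = D(x). Hence the three formulations produce the same LP bound. -/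

import Mathlib

/-!
Write `c i = ∑ j, |p i j - x j|`, so that `D` is the largest sum of `k` of the values `c i`.
For `x ∈ [0,1]` the constraints on `z` force `z i j ≥ |p i j - x j|`, so every feasible point of
each relaxation bounds the sum of `c` over a maximising `k`-set `S`, and `D` is a lower bound.
Conversely, by an exchange argument the threshold `t = min_{i ∈ S} c i` separates `S` from its
complement, whence `D = k t + ∑ i, max (c i - t) 0`; taking `z i j = |p i j - x j|`, `d = c`,
`t` and `v i = max (c i - t) 0` (resp. `u i = max (c i - t) 0`, `v h = t`) attains `D`.
-/

/-- Boolean identified with a 0/1 real. -/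
def bR (b : Bool) : ℝ := if b then 1 else 0

open Finset

section TopSum

variable {ι : Type*}

theorem sum_le_card_mul_add_sum_of_sub_le [Fintype ι] (S : Finset ι) {d v : ι → ℝ} {t : ℝ}
    (hv₀ : ∀ i, 0 ≤ v i) (hv : ∀ i, d i - t ≤ v i) :
    ∑ i ∈ S, d i ≤ S.card * t + ∑ i, v i :=
  calc ∑ i ∈ S, d i ≤ ∑ i ∈ S, (t + v i) := sum_le_sum fun i _ => by linarith [hv i]
    _ = S.card * t + ∑ i ∈ S, v i := by rw [sum_add_distrib, sum_const, nsmul_eq_mul]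
    _ ≤ S.card * t + ∑ i, v i :=
      add_le_add_right (sum_le_sum_of_subset_of_nonneg (subset_univ S) fun i _ _ => hv₀ i) _

theorem sum_le_sum_add_sum_of_le_add [Fintype ι] {k : ℕ} {S : Finset ι} (hS : S.card = k)
    {d u : ι → ℝ} {w : Fin k → ℝ} (hu₀ : ∀ i, 0 ≤ u i) (h : ∀ i l, d i ≤ u i + w l) :
    ∑ i ∈ S, d i ≤ ∑ i, u i + ∑ l, w l := by
  let e : S ≃ Fin k := S.equivFinOfCardEq hS
  calc ∑ i ∈ S, d i = ∑ a : S, d a := (sum_coe_sort S d).symm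
    _ ≤ ∑ a : S, (u a + w (e a)) := sum_le_sum fun a _ => h a (e a)
    _ = ∑ i ∈ S, u i + ∑ l, w l := by rw [sum_add_distrib, sum_coe_sort S u, e.sum_comp w]
    _ ≤ ∑ i, u i + ∑ l, w l :=
      add_le_add_left (sum_le_sum_of_subset_of_nonneg (subset_univ S) fun i _ _ => hu₀ i) _

theorem sum_eq_card_mul_add_sum_max_sub [Fintype ι] {c : ι → ℝ} {S : Finset ι} {t : ℝ}
    (hin : ∀ i ∈ S, t ≤ c i) (hout : ∀ i ∉ S, c i ≤ t) :
    ∑ i ∈ S, c i = S.card * t + ∑ i, max (c i - t) 0 := by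
  have hmax : ∑ i, max (c i - t) 0 = ∑ i ∈ S, (c i - t) := by
    rw [← sum_subset (subset_univ S) fun i _ hi => max_eq_right (by linarith [hout i hi])]
    exact sum_congr rfl fun i hi => max_eq_left (by linarith [hin i hi])
  rw [hmax, sum_sub_distrib, sum_const, nsmul_eq_mul]
  ring

variable [DecidableEq ι]

theorem le_of_isGreatest_sum {c : ι → ℝ} {k : ℕ} {D : ℝ}
    (hD : IsGreatest {s | ∃ S : Finset ι, S.card = k ∧ ∑ i ∈ S, c i = s} D)
    {S : Finset ι} (hS : S.card = k) (hSD : ∑ i ∈ S, c i = D)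
    {i j : ι} (hi : i ∉ S) (hj : j ∈ S) : c i ≤ c j := by
  have hi' : i ∉ S.erase j := fun h => hi (mem_of_mem_erase h)
  have hcard : (insert i (S.erase j)).card = k := by
    rw [card_insert_of_notMem hi', card_erase_of_mem hj, hS]
    have : 0 < k := hS ▸ card_pos.mpr ⟨j, hj⟩
    omega
  have hle := hD.2 ⟨_, hcard, rfl⟩
  rw [sum_insert hi'] at hle
  linarith [add_sum_erase S c hj]

theorem exists_threshold_of_isGreatest_sum {c : ι → ℝ} {k : ℕ} (hk : 1 ≤ k) {D : ℝ}
    (hD : IsGreatest {s | ∃ S : Finset ι, S.card = k ∧ ∑ i ∈ S, c i = s} D) :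
    ∃ S : Finset ι, S.card = k ∧ ∑ i ∈ S, c i = D ∧
      ∃ i₀ ∈ S, (∀ i ∈ S, c i₀ ≤ c i) ∧ ∀ i ∉ S, c i ≤ c i₀ := by
  obtain ⟨S, hS, hSD⟩ := hD.1
  obtain ⟨i₀, hi₀, hmin⟩ := S.exists_min_image c (card_pos.mp (by omega))
  exact ⟨S, hS, hSD, i₀, hi₀, hmin, fun i hi => le_of_isGreatest_sum hD hS hSD hi hi₀⟩

end TopSum

theorem abs_bR_sub_eq_max {x : ℝ} (hx : 0 ≤ x ∧ x ≤ 1) (b : Bool) :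
    |bR b - x| = max (bR b * (1 - x)) ((1 - bR b) * x) := by
  cases b <;> simp [bR, hx.1, hx.2, abs_of_nonneg hx.1, abs_of_nonneg (sub_nonneg.mpr hx.2)]

theorem abs_bR_sub_eq_add {x : ℝ} (hx : 0 ≤ x ∧ x ≤ 1) (b : Bool) :
    |bR b - x| = x * (1 - bR b) + bR b * (1 - x) := by
  cases b <;> simp [bR, abs_of_nonneg hx.1, abs_of_nonneg (sub_nonneg.mpr hx.2)]

theorem lp_bounds_coincide_general {n m k : ℕ} (hk1 : 1 ≤ k)
    (p : Fin n → Fin m → Bool) (x : Fin m → ℝ) (hx : ∀ j, 0 ≤ x j ∧ x j ≤ 1)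
    (D : ℝ)
    (hD : IsGreatest {s : ℝ | ∃ S : Finset (Fin n), S.card = k ∧
        ∑ i ∈ S, ∑ j : Fin m, |bR (p i j) - x j| = s} D) :
    IsLeast {v : ℝ | ∃ z : Fin n → Fin m → ℝ,
        (∀ (i : Fin n) (j : Fin m), bR (p i j) * (1 - x j) ≤ z i j) ∧
        (∀ (i : Fin n) (j : Fin m), (1 - bR (p i j)) * x j ≤ z i j) ∧
        (∀ S : Finset (Fin n), S.card = k → ∑ j : Fin m, ∑ i ∈ S, z i j ≤ v)} D ∧
    IsLeast {c : ℝ | ∃ (t : ℝ) (v : Fin n → ℝ) (d : Fin n → ℝ)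
        (z : Fin n → Fin m → ℝ),
        0 ≤ t ∧ (∀ i : Fin n, 0 ≤ v i) ∧
        (∀ (i : Fin n) (j : Fin m),
          x j * (1 - bR (p i j)) + bR (p i j) * (1 - x j) ≤ z i j) ∧
        (∀ i : Fin n, ∑ j : Fin m, z i j ≤ d i) ∧
        (∀ i : Fin n, d i - t ≤ v i) ∧
        c = k * t + ∑ i : Fin n, v i} D ∧
    IsLeast {c : ℝ | ∃ (u : Fin n → ℝ) (v : Fin k → ℝ) (d : Fin n → ℝ)
        (z : Fin n → Fin m → ℝ),
        (∀ i : Fin n, 0 ≤ u i) ∧ (∀ h : Fin k, 0 ≤ v h) ∧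
        (∀ (i : Fin n) (j : Fin m),
          x j * (1 - bR (p i j)) + bR (p i j) * (1 - x j) ≤ z i j) ∧
        (∀ i : Fin n, ∑ j : Fin m, z i j ≤ d i) ∧
        (∀ (i : Fin n) (h : Fin k), d i ≤ u i + v h) ∧
        c = ∑ i : Fin n, u i + ∑ h : Fin k, v h} D := by
  set a : Fin n → Fin m → ℝ := fun i j => |bR (p i j) - x j|
  set c : Fin n → ℝ := fun i => ∑ j, a i j
  obtain ⟨S, hS, rfl, i₀, -, hin, hout⟩ := exists_threshold_of_isGreatest_sum hk1 hD
  have ht₀ : 0 ≤ c i₀ := sum_nonneg fun j _ => abs_nonneg _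
  have hval := sum_eq_card_mul_add_sum_max_sub hin hout
  rw [hS] at hval
  have hcd : ∀ (d : Fin n → ℝ) (z : Fin n → Fin m → ℝ),
      (∀ i j, x j * (1 - bR (p i j)) + bR (p i j) * (1 - x j) ≤ z i j) →
      (∀ i, ∑ j, z i j ≤ d i) → ∑ i ∈ S, c i ≤ ∑ i ∈ S, d i := fun d z hz hzd =>
    sum_le_sum fun i _ =>
      (sum_le_sum fun j _ => (abs_bR_sub_eq_add (hx j) _).trans_le (hz i j)).trans (hzd i)
  refine ⟨⟨⟨a, fun i j => ?_, fun i j => ?_, fun S' hS' => ?_⟩, ?_⟩,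
    ⟨⟨c i₀, _, c, a, ht₀, fun i => le_max_right _ 0,
      fun i j => (abs_bR_sub_eq_add (hx j) _).ge, fun i => le_rfl,
      fun i => le_max_left _ 0, hval⟩, ?_⟩,
    ⟨⟨_, fun _ => c i₀, c, a, fun i => le_max_right _ 0, fun _ => ht₀,
      fun i j => (abs_bR_sub_eq_add (hx j) _).ge, fun i => le_rfl,
      fun i _ => by linarith [le_max_left (c i - c i₀) 0], ?_⟩, ?_⟩⟩
  · exact (abs_bR_sub_eq_max (hx j) _).ge.trans' (le_max_left _ _)
  · exact (abs_bR_sub_eq_max (hx j) _).ge.trans' (le_max_right _ _)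
  · exact sum_comm.trans_le (hD.2 ⟨S', hS', rfl⟩)
  · rintro v ⟨z, hz₁, hz₂, hzv⟩
    refine le_trans ?_ (sum_comm.trans_le (hzv S hS))
    exact sum_le_sum fun i _ => sum_le_sum fun j _ =>
      (abs_bR_sub_eq_max (hx j) _).trans_le (max_le (hz₁ i j) (hz₂ i j))
  · rintro _ ⟨t, v, d, z, -, hv₀, hz, hzd, hdv, rfl⟩
    exact (hcd d z hz hzd).trans (hS ▸ sum_le_card_mul_add_sum_of_sub_le S hv₀ hdv)
  · simp only [sum_const, card_univ, Fintype.card_fin, nsmul_eq_mul]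
    linarith
  · rintro _ ⟨u, v, d, z, hu₀, -, hz, hzd, hduv, rfl⟩
    exact (hcd d z hz hzd).trans (sum_le_sum_add_sum_of_le_add hS hu₀ hduv)

/-- For a fixed fractional `x ∈ [0,1]^m`, with
`D(x) = max_{|S|=k} Σ_{i∈S} Σ_j |p i j − x j|`, the continuous relaxations of
the three formulations (with `x` fixed) all have optimal value `D(x)`. -/
theorem lp_bounds_coincide {n m k : ℕ} (hk1 : 1 ≤ k) (hkn : k ≤ n)
    (p : Fin n → Fin m → Bool) (x : Fin m → ℝ) (hx : ∀ j, 0 ≤ x j ∧ x j ≤ 1)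
    (D : ℝ)
    (hD : IsGreatest {s : ℝ | ∃ S : Finset (Fin n), S.card = k ∧
        ∑ i ∈ S, ∑ j : Fin m, |bR (p i j) - x j| = s} D) :
    IsLeast {v : ℝ | ∃ z : Fin n → Fin m → ℝ,
        (∀ (i : Fin n) (j : Fin m), bR (p i j) * (1 - x j) ≤ z i j) ∧
        (∀ (i : Fin n) (j : Fin m), (1 - bR (p i j)) * x j ≤ z i j) ∧
        (∀ S : Finset (Fin n), S.card = k → ∑ j : Fin m, ∑ i ∈ S, z i j ≤ v)} D ∧
    IsLeast {c : ℝ | ∃ (t : ℝ) (v : Fin n → ℝ) (d : Fin n → ℝ)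
        (z : Fin n → Fin m → ℝ),
        0 ≤ t ∧ (∀ i : Fin n, 0 ≤ v i) ∧
        (∀ (i : Fin n) (j : Fin m),
          x j * (1 - bR (p i j)) + bR (p i j) * (1 - x j) ≤ z i j) ∧
        (∀ i : Fin n, ∑ j : Fin m, z i j ≤ d i) ∧
        (∀ i : Fin n, d i - t ≤ v i) ∧
        c = k * t + ∑ i : Fin n, v i} D ∧
    IsLeast {c : ℝ | ∃ (u : Fin n → ℝ) (v : Fin k → ℝ) (d : Fin n → ℝ)
        (z : Fin n → Fin m → ℝ),
        (∀ i : Fin n, 0 ≤ u i) ∧ (∀ h : Fin k, 0 ≤ v h) ∧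
        (∀ (i : Fin n) (j : Fin m),
          x j * (1 - bR (p i j)) + bR (p i j) * (1 - x j) ≤ z i j) ∧
        (∀ i : Fin n, ∑ j : Fin m, z i j ≤ d i) ∧
        (∀ (i : Fin n) (h : Fin k), d i ≤ u i + v h) ∧
        c = ∑ i : Fin n, u i + ∑ h : Fin k, v h} D :=
  lp_bounds_coincide_general hk1 p x hx D hD
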